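/- arXiv:2412.18888 — 2 statements merged into one kernel-verified Lean document; each statement's English description precedes it below -/
import Mathlib

section
/- Let X and Y be nonempty metric spaces and suppose Y is dotted connected, i.e., diam_u Y = 0 (in particular this holds when Y is path-connected). Then 2·d_GH(X, Y) ≥ diam_u X, where both sides are values in [0,∞]. In particular, if d_GH(X, Y) < ∞ for some dotted connected Y, then diam_u X < ∞, and if a sequence of path-connected metric spaces converges to X in the Gromov–Hausdorff distance, then diam_u X = 0. -/
open scoped ENNReal

noncomputable section

/-- Ultrametric pseudodistance: infimum over chains from `x` to `y` of the
maximal edge length of the chain. -/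
noncomputable def ultraDist {X : Type*} [MetricSpace X] (x y : X) : ℝ≥0∞ :=
  ⨅ (n : ℕ) (f : Fin (n + 1) → X) (_ : f 0 = x) (_ : f (Fin.last n) = y),
    ⨆ i : Fin n, edist (f i.castSucc) (f i.succ)

/-- Ultrametric pseudodiameter. -/
noncomputable def ultraDiam (X : Type*) [MetricSpace X] : ℝ≥0∞ :=
  ⨆ (x : X) (y : X), ultraDist x y

/-- A correspondence between `X` and `Y`: a relation whose projections are surjective. -/
def IsCorrespondence {X Y : Type*} (R : Set (X × Y)) : Prop :=
  (∀ x : X, ∃ y : Y, (x, y) ∈ R) ∧ (∀ y : Y, ∃ x : X, (x, y) ∈ R)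

/-- Distortion of a relation. -/
noncomputable def distortion {X Y : Type*} [MetricSpace X] [MetricSpace Y]
    (R : Set (X × Y)) : ℝ≥0∞ :=
  ⨆ (p ∈ R) (q ∈ R), ENNReal.ofReal |dist p.1 q.1 - dist p.2 q.2|

/-- Gromov–Hausdorff distance: half the infimal distortion of correspondences. -/
noncomputable def ghDist (X Y : Type*) [MetricSpace X] [MetricSpace Y] : ℝ≥0∞ :=
  (⨅ (R : Set (X × Y)) (_ : IsCorrespondence R), distortion R) / 2

/-! A correspondence `R` lifts an `r`-chain in `Y` to an `(r + dis R)`-chain in `X` joining any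
two lifts of its endpoints, so `diam_u X ≤ diam_u Y + dis R`. Taking the infimum over `R` gives
`diam_u X ≤ diam_u Y + 2 d_GH(X, Y)`. -/

open Relation

section Chain

variable {α : Type*} {r : α → α → Prop}

theorem Relation.ReflTransGen.exists_fin_chain {a b : α} (h : ReflTransGen r a b) :
    ∃ (n : ℕ) (f : Fin (n + 1) → α), f 0 = a ∧ f (Fin.last n) = b ∧
      ∀ i : Fin n, r (f i.castSucc) (f i.succ) := by
  induction h with
  | refl => exact ⟨0, fun _ => a, rfl, rfl, Fin.elim0⟩
  | @tail b c _ hbc ih =>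
    obtain ⟨n, f, hf0, hfn, hf⟩ := ih
    refine ⟨n + 1, Fin.snoc f c, by simpa using hf0, by simp, Fin.lastCases ?_ fun i => ?_⟩
    · simpa [hfn] using hbc
    · simpa only [Fin.succ_castSucc, Fin.snoc_castSucc] using hf i

theorem Relation.reflTransGen_of_fin_chain {n : ℕ} (f : Fin (n + 1) → α)
    (hf : ∀ i : Fin n, r (f i.castSucc) (f i.succ)) : ReflTransGen r (f 0) (f (Fin.last n)) :=
  Fin.induction (motive := fun k => ReflTransGen r (f 0) (f k)) ReflTransGen.refl
    (fun i ih => ih.tail (hf i)) (Fin.last n)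

end Chain

section UltraDist

variable {X Y : Type*} [MetricSpace X] [MetricSpace Y]

theorem ultraDist_le_of_reflTransGen {x y : X} {r : ℝ≥0∞}
    (h : ReflTransGen (fun a b => edist a b ≤ r) x y) : ultraDist x y ≤ r := by
  obtain ⟨n, f, hf0, hfn, hf⟩ := h.exists_fin_chain
  exact iInf_le_of_le n <| iInf_le_of_le f <| iInf_le_of_le hf0 <| iInf_le_of_le hfn <|
    iSup_le hf

theorem reflTransGen_of_ultraDist_lt {x y : X} {r : ℝ≥0∞} (h : ultraDist x y < r) :
    ReflTransGen (fun a b => edist a b ≤ r) x y := by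
  simp only [ultraDist, iInf_lt_iff] at h
  obtain ⟨n, f, rfl, rfl, hf⟩ := h
  exact reflTransGen_of_fin_chain f fun i => ((le_iSup _ i).trans_lt hf).le

theorem edist_le_edist_add_distortion {R : Set (X × Y)} {x x' : X} {y y' : Y}
    (h : (x, y) ∈ R) (h' : (x', y') ∈ R) : edist x x' ≤ edist y y' + distortion R := by
  have hdis : ENNReal.ofReal |dist x x' - dist y y'| ≤ distortion R :=
    le_iSup₂_of_le (x, y) h <| le_iSup₂_of_le (x', y') h' le_rfl
  calc edist x x' = ENNReal.ofReal (dist y y' + (dist x x' - dist y y')) := by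
        rw [edist_dist, add_sub_cancel]
    _ ≤ ENNReal.ofReal (dist y y') + ENNReal.ofReal |dist x x' - dist y y'| :=
        (ENNReal.ofReal_add_le).trans' <|
          ENNReal.ofReal_le_ofReal (by gcongr; exact le_abs_self _)
    _ ≤ edist y y' + distortion R := by rw [← edist_dist]; gcongr

theorem Relation.ReflTransGen.lift_edist_le_add_distortion {R : Set (X × Y)}
    (hR : ∀ y, ∃ x, (x, y) ∈ R) {r : ℝ≥0∞} {x x' : X} {y y' : Y}
    (hy : ReflTransGen (fun a b => edist a b ≤ r) y y')
    (h : (x, y) ∈ R) (h' : (x', y') ∈ R) :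
    ReflTransGen (fun a b => edist a b ≤ r + distortion R) x x' := by
  induction hy generalizing x' with
  | refl =>
    refine .single <| (edist_le_edist_add_distortion h h').trans ?_
    simp
  | @tail b c _ hbc ih =>
    obtain ⟨z, hz⟩ := hR b
    exact (ih hz).tail <| (edist_le_edist_add_distortion hz h').trans (by gcongr)

theorem ultraDist_le_ultraDist_add_distortion {R : Set (X × Y)} (hR : ∀ y, ∃ x, (x, y) ∈ R)
    {x x' : X} {y y' : Y} (h : (x, y) ∈ R) (h' : (x', y') ∈ R) :
    ultraDist x x' ≤ ultraDist y y' + distortion R := by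
  refine ENNReal.le_of_forall_pos_le_add fun ε hε hlt => ?_
  have hy : ultraDist y y' < ultraDist y y' + ε :=
    ENNReal.lt_add_right (ENNReal.add_lt_top.1 hlt).1.ne (by exact_mod_cast hε.ne')
  calc ultraDist x x' ≤ ultraDist y y' + ε + distortion R :=
        ultraDist_le_of_reflTransGen <|
          (reflTransGen_of_ultraDist_lt hy).lift_edist_le_add_distortion hR h h'
    _ = ultraDist y y' + distortion R + ε := add_right_comm _ _ _

theorem ultraDiam_le_ultraDiam_add_distortion {R : Set (X × Y)} (hR : IsCorrespondence R) :
    ultraDiam X ≤ ultraDiam Y + distortion R := by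
  refine iSup₂_le fun x x' => ?_
  obtain ⟨y, hy⟩ := hR.1 x
  obtain ⟨y', hy'⟩ := hR.1 x'
  calc ultraDist x x' ≤ ultraDist y y' + distortion R :=
        ultraDist_le_ultraDist_add_distortion hR.2 hy hy'
    _ ≤ ultraDiam Y + distortion R := by
        gcongr; exact le_iSup₂ (f := fun a b : Y => ultraDist a b) y y'

theorem two_mul_ghDist :
    2 * ghDist X Y = ⨅ (R : Set (X × Y)) (_ : IsCorrespondence R), distortion R :=
  ENNReal.mul_div_cancel two_ne_zero ENNReal.ofNat_ne_top

theorem ultraDiam_le_ultraDiam_add_two_mul_ghDist :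
    ultraDiam X ≤ ultraDiam Y + 2 * ghDist X Y := by
  simp only [two_mul_ghDist, ENNReal.add_iInf]
  exact le_iInf₂ fun _ => ultraDiam_le_ultraDiam_add_distortion

end UltraDist

theorem ultraDiam_le_two_ghDist_general {X Y : Type*} [MetricSpace X] [MetricSpace Y]
    (hY : ultraDiam Y = 0) :
    ultraDiam X ≤ 2 * ghDist X Y := by
  simpa [hY] using ultraDiam_le_ultraDiam_add_two_mul_ghDist (X := X) (Y := Y)

/-- if `Y` is dotted connected (zero ultrametric pseudodiameter),
then twice the Gromov–Hausdorff distance from `X` to `Y` bounds `diam_u X`. -/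
theorem ultraDiam_le_two_ghDist {X Y : Type*} [MetricSpace X] [MetricSpace Y]
    [Nonempty X] [Nonempty Y] (hY : ultraDiam Y = 0) :
    ultraDiam X ≤ 2 * ghDist X Y :=
  ultraDiam_le_two_ghDist_general hY

end
end

section
/- Let X be a nonempty metric space with finite ultrametric pseudodiameter c = diam_u X, and let t be any real number with t > c. Then there exists a nonempty path-connected metric space Y with d_GH(X, Y) ≤ t/2. Consequently, the infimum of d_GH(X, Y) over all path-connected metric spaces Y equals c/2, and it coincides with the infimum of d_GH(X, Y) over all dotted connected Y. -/
open scoped ENNReal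

noncomputable section

/-!
Embed `X` isometrically into `X →ᵇ ℝ` (Kuratowski) and join by a straight segment every two
points at distance at most `t`. Since `diam_u X < t`, any two points of `X` are linked by a
chain of steps shorter than `t`, so this union of segments `Y` is path-connected; and every
point of a segment lies within half its length of an endpoint, so `d_GH(X, Y) ≤ t/2`.

Conversely, a correspondence of distortion `δ` carries the `ε`-chains of `Y` to
`(δ + ε)`-chains of `X`, so `diam_u X ≤ diam_u Y + 2 d_GH(X, Y)`; and a connected space has
`diam_u = 0`, because for each `ε` the classes of `ε`-chain equivalence are open.
-/

open Relation
open scoped BoundedContinuousFunction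

universe u

section Chains

variable {X : Type*} [MetricSpace X]

lemma ultraDist_le_chain {n : ℕ} (f : Fin (n + 1) → X) {x y : X}
    (h0 : f 0 = x) (hl : f (Fin.last n) = y) :
    ultraDist x y ≤ ⨆ i : Fin n, edist (f i.castSucc) (f i.succ) :=
  iInf_le_of_le n (iInf_le_of_le f (iInf_le_of_le h0 (iInf_le _ hl)))

lemma ultraDist_lt_iff {x y : X} {T : ℝ≥0∞} :
    ultraDist x y < T ↔ ∃ (n : ℕ) (f : Fin (n + 1) → X), f 0 = x ∧ f (Fin.last n) = y ∧
      (⨆ i : Fin n, edist (f i.castSucc) (f i.succ)) < T := by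
  simp only [ultraDist, iInf_lt_iff, exists_prop]

lemma ultraDist_self (x : X) : ultraDist x x = 0 := by
  simpa using ultraDist_le_chain (n := 0) (fun _ => x) rfl rfl

lemma ultraDist_le_ultraDiam (x y : X) : ultraDist x y ≤ ultraDiam X :=
  le_iSup₂ (f := fun a b : X => ultraDist a b) x y

lemma ultraDist_lt_of_lt_of_edist_lt {x y z : X} {T : ℝ≥0∞} (hxy : ultraDist x y < T)
    (hyz : edist y z < T) : ultraDist x z < T := by
  obtain ⟨n, f, rfl, rfl, hf⟩ := ultraDist_lt_iff.1 hxy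
  have hM : max (⨆ i : Fin n, edist (f i.castSucc) (f i.succ)) (edist (f (Fin.last n)) z) < T :=
    max_lt hf hyz
  refine (ultraDist_le_chain (Fin.snoc f z : Fin (n + 2) → X) (Fin.snoc_castSucc (i := 0) ..)
    (Fin.snoc_last ..)).trans_lt ((iSup_le fun i => ?_).trans_lt hM)
  induction i using Fin.lastCases with
  | last =>
    rw [Fin.succ_last, Fin.snoc_last, Fin.snoc_castSucc]
    exact le_max_right _ _
  | cast j =>
    rw [Fin.succ_castSucc, Fin.snoc_castSucc, Fin.snoc_castSucc]
    exact (le_iSup (fun i : Fin n => edist (f i.castSucc) (f i.succ)) j).trans (le_max_left _ _)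

lemma ultraDist_lt_iff_reflTransGen {x y : X} {T : ℝ≥0∞} (hT : 0 < T) :
    ultraDist x y < T ↔ ReflTransGen (fun a b : X => edist a b < T) x y := by
  refine ⟨fun h => ?_, fun h => ?_⟩
  · obtain ⟨n, f, rfl, rfl, hf⟩ := ultraDist_lt_iff.1 h
    suffices ∀ j : Fin (n + 1), ReflTransGen (fun a b : X => edist a b < T) (f 0) (f j) from
      this _
    intro j
    induction j using Fin.induction with
    | zero => exact .refl
    | succ i ih =>
      exact ih.tail ((le_iSup (fun i : Fin n => edist (f i.castSucc) (f i.succ)) i).trans_lt hf)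
  · induction h with
    | refl => simpa [ultraDist_self] using hT
    | tail _ hbc ih => exact ultraDist_lt_of_lt_of_edist_lt ih hbc

end Chains

lemma ultraDiam_eq_zero_of_preconnectedSpace (X : Type*) [MetricSpace X] [PreconnectedSpace X] :
    ultraDiam X = 0 := by
  refine nonpos_iff_eq_zero.1 (iSup₂_le fun x y => le_of_forall_gt fun ε hε => ?_)
  refine (ultraDist_lt_iff_reflTransGen hε).2 (PreconnectedSpace.induction₂' _ (fun z => ?_)
    ⟨fun _ _ _ => ReflTransGen.trans⟩ x y)
  filter_upwards [Metric.eball_mem_nhds z hε] with w hw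
  exact ⟨.single (by rwa [edist_comm]), .single hw⟩

section Correspondence

variable {X Y : Type*} [MetricSpace X] [MetricSpace Y]

lemma edist_le_distortion_add {R : Set (X × Y)} {a a' : X} {b b' : Y}
    (h : (a, b) ∈ R) (h' : (a', b') ∈ R) :
    edist a a' ≤ distortion R + edist b b' := by
  have hle : ENNReal.ofReal |dist a a' - dist b b'| ≤ distortion R :=
    le_iSup₂_of_le (a, b) h (le_iSup₂_of_le (a', b') h' le_rfl)
  calc edist a a' = ENNReal.ofReal (dist a a') := edist_dist _ _
    _ ≤ ENNReal.ofReal (|dist a a' - dist b b'| + dist b b') :=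
        ENNReal.ofReal_le_ofReal (by linarith [le_abs_self (dist a a' - dist b b')])
    _ = ENNReal.ofReal |dist a a' - dist b b'| + edist b b' := by
        rw [ENNReal.ofReal_add (abs_nonneg _) dist_nonneg, edist_dist]
    _ ≤ distortion R + edist b b' := add_le_add_left hle _

lemma reflTransGen_edist_lt_distortion_add {R : Set (X × Y)} (hR : ∀ y, ∃ x, (x, y) ∈ R)
    (hdis : distortion R ≠ ⊤) {T : ℝ≥0∞} (hT : 0 < T) {x x' : X} {y y' : Y}
    (hxy : (x, y) ∈ R) (hxy' : (x', y') ∈ R)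
    (h : ReflTransGen (fun b c : Y => edist b c < T) y y') :
    ReflTransGen (fun a a' : X => edist a a' < distortion R + T) x x' := by
  induction h generalizing x' with
  | refl =>
    refine .single ((edist_le_distortion_add hxy hxy').trans_lt ?_)
    simpa using ENNReal.add_lt_add_left hdis hT
  | @tail b c _ hbc ih =>
    obtain ⟨a, ha⟩ := hR b
    exact (ih ha).tail ((edist_le_distortion_add ha hxy').trans_lt
      (ENNReal.add_lt_add_left hdis hbc))

lemma ultraDist_le_distortion_add {R : Set (X × Y)} (hR : ∀ y, ∃ x, (x, y) ∈ R)
    {x x' : X} {y y' : Y} (hxy : (x, y) ∈ R) (hxy' : (x', y') ∈ R) :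
    ultraDist x x' ≤ distortion R + ultraDist y y' := by
  refine ENNReal.le_of_forall_pos_le_add fun ε hε hfin => ?_
  have hdis : distortion R ≠ ⊤ := (ENNReal.add_lt_top.1 hfin).1.ne
  have hT : ultraDist y y' < ultraDist y y' + ε :=
    ENNReal.lt_add_right (ENNReal.add_lt_top.1 hfin).2.ne (by exact_mod_cast hε.ne')
  have hT0 : 0 < ultraDist y y' + ε := zero_le.trans_lt hT
  rw [add_assoc]
  exact ((ultraDist_lt_iff_reflTransGen (hT0.trans_le le_add_self)).2
    (reflTransGen_edist_lt_distortion_add hR hdis hT0 hxy hxy'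
      ((ultraDist_lt_iff_reflTransGen hT0).1 hT))).le

lemma ultraDiam_le_distortion_add_ultraDiam {R : Set (X × Y)} (hR : IsCorrespondence R) :
    ultraDiam X ≤ distortion R + ultraDiam Y := by
  refine iSup₂_le fun x x' => ?_
  obtain ⟨y, hy⟩ := hR.1 x
  obtain ⟨y', hy'⟩ := hR.1 x'
  exact (ultraDist_le_distortion_add hR.2 hy hy').trans
    (by gcongr; exact ultraDist_le_ultraDiam y y')

lemma ultraDiam_div_two_le_ghDist (hY : ultraDiam Y = 0) : ultraDiam X / 2 ≤ ghDist X Y :=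
  ENNReal.div_le_div_right (le_iInf₂ fun R hR => by
    simpa [hY] using ultraDiam_le_distortion_add_ultraDiam hR) 2

lemma ghDist_le_of_isometry {Z : Type*} [MetricSpace Z] {ι : X → Z} {κ : Y → Z}
    (hι : Isometry ι) (hκ : Isometry κ) {r : ℝ}
    (hX : ∀ x, ∃ y, dist (ι x) (κ y) ≤ r) (hY : ∀ y, ∃ x, dist (ι x) (κ y) ≤ r) :
    ghDist X Y ≤ ENNReal.ofReal r := by
  let R : Set (X × Y) := {p | dist (ι p.1) (κ p.2) ≤ r}
  have hdis : distortion R ≤ ENNReal.ofReal (2 * r) := by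
    refine iSup₂_le fun p hp => iSup₂_le fun q hq => ENNReal.ofReal_le_ofReal ?_
    rw [← hι.dist_eq, ← hκ.dist_eq, ← Real.dist_eq]
    linarith [dist_dist_dist_le (ι p.1) (ι q.1) (κ p.2) (κ q.2), dist_comm (ι q.1) (κ q.2),
      show dist (ι p.1) (κ p.2) ≤ r from hp, show dist (ι q.1) (κ q.2) ≤ r from hq]
  calc ghDist X Y ≤ distortion R / 2 := ENNReal.div_le_div_right (iInf₂_le R ⟨hX, hY⟩) 2
    _ ≤ ENNReal.ofReal (2 * r) / 2 := ENNReal.div_le_div_right hdis 2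
    _ = ENNReal.ofReal r := by
      rw [ENNReal.ofReal_mul zero_le_two, ENNReal.ofReal_ofNat, mul_comm,
        ENNReal.mul_div_cancel_right two_ne_zero ENNReal.ofNat_ne_top]

end Correspondence

section Kuratowski

variable {X : Type*} [MetricSpace X]

def kuratowskiMap (x₀ x : X) : X →ᵇ ℝ :=
  .ofNormedAddCommGroup (fun z => dist x z - dist x₀ z) (by fun_prop) (dist x x₀)
    fun z => abs_dist_sub_le x x₀ z

lemma isometry_kuratowskiMap (x₀ : X) : Isometry (kuratowskiMap x₀) := by
  refine Isometry.of_dist_eq fun x y => le_antisymm ?_ ?_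
  · refine (BoundedContinuousFunction.dist_le dist_nonneg).2 fun z => ?_
    simpa [kuratowskiMap, Real.dist_eq] using abs_dist_sub_le x y z
  · simpa [kuratowskiMap, Real.dist_eq] using
      BoundedContinuousFunction.dist_coe_le_dist (f := kuratowskiMap x₀ x)
        (g := kuratowskiMap x₀ y) y

end Kuratowski

section SegmentGraph

variable {X E : Type*} [MetricSpace X] [NormedAddCommGroup E] [NormedSpace ℝ E]

/-- The geometric realization in `E` of the graph on `X` joining points at distance at
most `t`, with vertices placed by `ι`. -/
def segmentGraph (ι : X → E) (t : ℝ) : Set E :=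
  ⋃ (a : X) (b : X) (_ : dist a b ≤ t), segment ℝ (ι a) (ι b)

variable {ι : X → E} {t : ℝ}

lemma segment_subset_segmentGraph {a b : X} (h : dist a b ≤ t) :
    segment ℝ (ι a) (ι b) ⊆ segmentGraph ι t :=
  fun _ hz => Set.mem_iUnion₂.2 ⟨a, b, Set.mem_iUnion.2 ⟨h, hz⟩⟩

lemma mem_segmentGraph (ht : 0 ≤ t) (x : X) : ι x ∈ segmentGraph ι t :=
  segment_subset_segmentGraph (a := x) (b := x) (by simpa using ht) (left_mem_segment ℝ _ _)

lemma isPathConnected_segmentGraph [Nonempty X] (ht : ultraDiam X < ENNReal.ofReal t) :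
    IsPathConnected (segmentGraph ι t) := by
  have ht0 : 0 < t := ENNReal.ofReal_pos.1 (zero_le.trans_lt ht)
  have hjoin (a b : X) : JoinedIn (segmentGraph ι t) (ι a) (ι b) := by
    have hab := (ultraDist_lt_iff_reflTransGen (ENNReal.ofReal_pos.2 ht0)).1
      ((ultraDist_le_ultraDiam a b).trans_lt ht)
    induction hab with
    | refl => exact .refl (mem_segmentGraph ht0.le a)
    | tail _ hbc ih =>
      exact ih.trans (.of_segment_subset (segment_subset_segmentGraph (edist_lt_ofReal.1 hbc).le))
  obtain ⟨x₀⟩ := ‹Nonempty X›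
  refine ⟨ι x₀, mem_segmentGraph ht0.le x₀, fun z hz => ?_⟩
  simp only [segmentGraph, Set.mem_iUnion] at hz
  obtain ⟨a, b, hab, hz⟩ := hz
  have hsub : segment ℝ (ι a) z ⊆ segment ℝ (ι a) (ι b) :=
    (convex_segment _ _).segment_subset (left_mem_segment ℝ _ _) hz
  exact (hjoin x₀ a).trans (.of_segment_subset (hsub.trans (segment_subset_segmentGraph hab)))

lemma exists_dist_le_of_mem_segmentGraph (hι : Isometry ι) {z : E}
    (hz : z ∈ segmentGraph ι t) : ∃ x, dist (ι x) z ≤ t / 2 := by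
  simp only [segmentGraph, Set.mem_iUnion] at hz
  obtain ⟨a, b, hab, hz⟩ := hz
  have hsum := dist_add_dist_of_mem_segment hz
  rw [hι.dist_eq] at hsum
  rcases le_total (dist (ι a) z) (dist z (ι b)) with h | h
  · exact ⟨a, by linarith⟩
  · exact ⟨b, by rw [dist_comm]; linarith⟩

lemma ghDist_segmentGraph_le (hι : Isometry ι) (ht : 0 ≤ t) :
    ghDist X (segmentGraph ι t) ≤ ENNReal.ofReal (t / 2) :=
  ghDist_le_of_isometry hι isometry_subtype_coe
    (fun x => ⟨⟨ι x, mem_segmentGraph ht x⟩, by simpa using div_nonneg ht zero_le_two⟩)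
    (fun z => exists_dist_le_of_mem_segmentGraph hι z.2)

end SegmentGraph

lemma exists_pathConnectedSpace_ghDist_le (X : Type u) [MetricSpace X] [Nonempty X] {t : ℝ}
    (ht : ultraDiam X < ENNReal.ofReal t) :
    ∃ (Y : Type u) (mY : MetricSpace Y),
      @PathConnectedSpace Y mY.toUniformSpace.toTopologicalSpace ∧
      @ghDist X Y _ mY ≤ ENNReal.ofReal (t / 2) := by
  let x₀ : X := Classical.arbitrary X
  refine ⟨segmentGraph (kuratowskiMap x₀) t, inferInstance,
    isPathConnected_iff_pathConnectedSpace.1 (isPathConnected_segmentGraph ht),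
    ghDist_segmentGraph_le (isometry_kuratowskiMap x₀) ?_⟩
  exact (ENNReal.ofReal_pos.1 (zero_le.trans_lt ht)).le

lemma ENNReal.le_div_two_of_forall_lt_ofReal {a c : ℝ≥0∞}
    (h : ∀ t : ℝ, c < ENNReal.ofReal t → a ≤ ENNReal.ofReal (t / 2)) : a ≤ c / 2 := by
  refine le_of_forall_gt fun b hb => ?_
  obtain ⟨r, -, hcr, hrb⟩ := ENNReal.lt_iff_exists_real_btwn.1 hb
  have hc : c < ENNReal.ofReal (2 * r) := by
    rw [ENNReal.ofReal_mul zero_le_two, ENNReal.ofReal_ofNat, mul_comm]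
    exact (ENNReal.div_lt_iff (.inl two_ne_zero) (.inl ENNReal.ofNat_ne_top)).1 hcr
  calc a ≤ ENNReal.ofReal (2 * r / 2) := h _ hc
    _ = ENNReal.ofReal r := by rw [mul_div_cancel_left₀ r two_ne_zero]
    _ < b := hrb

theorem ghDist_inf_pathConnected_general {X : Type u} [MetricSpace X] [Nonempty X] :
    (∀ t : ℝ, ultraDiam X < ENNReal.ofReal t →
      ∃ (Y : Type u) (mY : MetricSpace Y),
        @PathConnectedSpace Y mY.toUniformSpace.toTopologicalSpace ∧
        @ghDist X Y _ mY ≤ ENNReal.ofReal (t / 2)) ∧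
    (⨅ (Y : Type u) (mY : MetricSpace Y)
        (_ : @PathConnectedSpace Y mY.toUniformSpace.toTopologicalSpace),
        @ghDist X Y _ mY) = ultraDiam X / 2 ∧
    (⨅ (Y : Type u) (mY : MetricSpace Y) (_ : Nonempty Y) (_ : @ultraDiam Y mY = 0),
        @ghDist X Y _ mY) = ultraDiam X / 2 := by
  have hexists := fun t (ht : ultraDiam X < ENNReal.ofReal t) =>
    exists_pathConnectedSpace_ghDist_le X ht
  refine ⟨hexists, le_antisymm ?_ ?_, le_antisymm ?_ ?_⟩
  · refine ENNReal.le_div_two_of_forall_lt_ofReal fun t ht => ?_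
    obtain ⟨Y, mY, hpc, hgh⟩ := hexists t ht
    exact iInf₂_le_of_le Y mY (iInf_le_of_le hpc hgh)
  · exact le_iInf₂ fun Y mY => le_iInf fun _ =>
      ultraDiam_div_two_le_ghDist (ultraDiam_eq_zero_of_preconnectedSpace Y)
  · refine ENNReal.le_div_two_of_forall_lt_ofReal fun t ht => ?_
    obtain ⟨Y, mY, hpc, hgh⟩ := hexists t ht
    exact iInf₂_le_of_le Y mY (iInf₂_le_of_le hpc.nonempty
      (ultraDiam_eq_zero_of_preconnectedSpace Y) hgh)
  · exact le_iInf₂ fun Y mY => le_iInf₂ fun _ hY0 => ultraDiam_div_two_le_ghDist hY0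

/-- for a nonempty metric space with finite ultrametric
pseudodiameter `c`, for every `t > c` there is a path-connected metric space at
Gromov–Hausdorff distance at most `t/2` from `X`; consequently the infimum of
`d_GH(X,Y)` over path-connected `Y` equals `c/2`, and so does the infimum over
dotted connected `Y`. -/
theorem ghDist_inf_pathConnected {X : Type u} [MetricSpace X] [Nonempty X]
    (hfin : ultraDiam X ≠ ⊤) :
    (∀ t : ℝ, ultraDiam X < ENNReal.ofReal t →
      ∃ (Y : Type u) (mY : MetricSpace Y),
        @PathConnectedSpace Y mY.toUniformSpace.toTopologicalSpace ∧
        @ghDist X Y _ mY ≤ ENNReal.ofReal (t / 2)) ∧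
    (⨅ (Y : Type u) (mY : MetricSpace Y)
        (_ : @PathConnectedSpace Y mY.toUniformSpace.toTopologicalSpace),
        @ghDist X Y _ mY) = ultraDiam X / 2 ∧
    (⨅ (Y : Type u) (mY : MetricSpace Y) (_ : Nonempty Y) (_ : @ultraDiam Y mY = 0),
        @ghDist X Y _ mY) = ultraDiam X / 2 :=
  ghDist_inf_pathConnected_general
end
end
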